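/- Let r, s, L be nonnegative integers with s ≥ 1 and L ≥ 2s + r + 1. Then every (L,s,r) PPRIC code C satisfies |C| · binom(L−s, r+2) ≥ binom(L, r+2). -/

import Mathlib

/-!
A word `y` of weight `r + 2` lies outside `B(0, r)`, hence outside some ball `B(c, r + s)` with
`c ∈ C`. Over `𝔽₂`, `d(c, y) = wt c + wt y - 2 |supp c ∩ supp y|`, which here is
`s + r + 2 - 2 |supp c ∩ supp y|`, so `supp y` avoids `supp c`. Hence the `binom(L, r+2)` words of
weight `r + 2` are covered by `|C|` families of words supported off some `supp c`, each of size
`binom(L-s, r+2)`.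
-/

/-- The Hamming ball of radius `ρ` centered at `x` in `𝔽₂^L`. -/
def pball (L : ℕ) (x : Fin L → ZMod 2) (ρ : ℕ) : Set (Fin L → ZMod 2) :=
  {y | hammingDist x y ≤ ρ}

/-- `C` is an `(L,s,r)` PPRIC code: a set of words of Hamming weight exactly `s`
such that `B(0,r) = ⋂_{c ∈ C} B(c, r+s)`. -/
def IsPPRIC (L s r : ℕ) (C : Set (Fin L → ZMod 2)) : Prop :=
  (∀ c ∈ C, hammingNorm c = s) ∧
  pball L 0 r = ⋂ c ∈ C, pball L c (r + s)

open Finset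

section HammingSupport

variable {ι : Type*} [Fintype ι]

def hammingSupport {β : Type*} [Zero β] [DecidableEq β] (x : ι → β) : Finset ι :=
  {i | x i ≠ 0}

theorem hammingNorm_eq_card_hammingSupport {β : Type*} [Zero β] [DecidableEq β] (x : ι → β) :
    hammingNorm x = #(hammingSupport x) :=
  rfl

theorem hammingSupport_bijective [DecidableEq ι] :
    Function.Bijective (hammingSupport : (ι → ZMod 2) → Finset ι) := by
  have eq_of_ne_zero_iff : ∀ a b : ZMod 2, (a ≠ 0 ↔ b ≠ 0) → a = b := by decide
  refine ⟨fun x y hxy => funext fun i => eq_of_ne_zero_iff _ _ ?_,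
    fun S => ⟨fun i => if i ∈ S then 1 else 0, ?_⟩⟩
  · simpa only [hammingSupport, mem_filter, mem_univ, true_and] using Finset.ext_iff.1 hxy i
  · ext i
    by_cases hi : i ∈ S <;> simp [hammingSupport, hi]

theorem card_filter_hammingNorm_eq_and_hammingSupport_subset [DecidableEq ι] (T : Finset ι)
    (k : ℕ) :
    #{y : ι → ZMod 2 | hammingNorm y = k ∧ hammingSupport y ⊆ T} = (#T).choose k := by
  rw [← card_powersetCard]
  refine card_nbij hammingSupport (fun y hy => ?_) hammingSupport_bijective.1.injOn
    (fun S hS => ?_)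
  · rw [mem_coe, mem_filter] at hy
    exact mem_coe.2 (mem_powersetCard.2 ⟨hy.2.2, hy.2.1⟩)
  · obtain ⟨y, rfl⟩ := hammingSupport_bijective.2 S
    rw [mem_coe, mem_powersetCard] at hS
    exact ⟨y, mem_filter.2 ⟨mem_univ y, hS.2, hS.1⟩, rfl⟩

theorem hammingDist_add_two_mul_card_inter [DecidableEq ι] (x y : ι → ZMod 2) :
    hammingDist x y + 2 * #(hammingSupport x ∩ hammingSupport y) =
      hammingNorm x + hammingNorm y := by
  have hdiff : ({i | x i ≠ y i} : Finset ι) =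
      (hammingSupport x ∪ hammingSupport y) \ (hammingSupport x ∩ hammingSupport y) := by
    have ne_iff : ∀ a b : ZMod 2, a ≠ b ↔ (a ≠ 0 ∨ b ≠ 0) ∧ ¬(a ≠ 0 ∧ b ≠ 0) := by decide
    ext i
    simp only [hammingSupport, mem_filter, mem_sdiff, mem_union, mem_inter, mem_univ, true_and]
    exact ne_iff _ _
  have hsub : hammingSupport x ∩ hammingSupport y ⊆ hammingSupport x ∪ hammingSupport y :=
    inter_subset_union
  rw [hammingDist, hdiff, card_sdiff_of_subset hsub, hammingNorm_eq_card_hammingSupport,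
    hammingNorm_eq_card_hammingSupport, ← card_union_add_card_inter]
  have := card_le_card hsub
  omega

end HammingSupport

theorem IsPPRIC.exists_disjoint_hammingSupport {L s r : ℕ} {C : Set (Fin L → ZMod 2)}
    (hC : IsPPRIC L s r C) {y : Fin L → ZMod 2} (hr : r < hammingNorm y)
    (hy : hammingNorm y ≤ r + 2) :
    ∃ c ∈ C, Disjoint (hammingSupport c) (hammingSupport y) := by
  have hy_far : y ∉ pball L 0 r := fun hy_near => by
    have : hammingDist 0 y ≤ r := hy_near
    rw [hammingDist_zero_left] at this
    omega
  rw [hC.2] at hy_far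
  simp only [Set.mem_iInter, not_forall] at hy_far
  obtain ⟨c, hc, hcy⟩ := hy_far
  have hdist : r + s < hammingDist c y := not_le.1 hcy
  have hsum := hammingDist_add_two_mul_card_inter c y
  rw [hC.1 c hc] at hsum
  refine ⟨c, hc, disjoint_iff_inter_eq_empty.2 (card_eq_zero.1 ?_)⟩
  omega

theorem stmt6_general (L r s : ℕ)
    (C : Finset (Fin L → ZMod 2)) (hC : IsPPRIC L s r ↑C) :
    Nat.choose L (r + 2) ≤ C.card * Nat.choose (L - s) (r + 2) := by
  let words (T : Finset (Fin L)) : Finset (Fin L → ZMod 2) :=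
    {y | hammingNorm y = r + 2 ∧ hammingSupport y ⊆ T}
  have hcover : words univ ⊆ C.biUnion fun c => words (hammingSupport c)ᶜ := by
    intro y hy
    have hwt : hammingNorm y = r + 2 := (mem_filter.1 hy).2.1
    obtain ⟨c, hc, hdisj⟩ := hC.exists_disjoint_hammingSupport (by omega) hwt.le
    exact mem_biUnion.2
      ⟨c, hc, mem_filter.2 ⟨mem_univ y, hwt, subset_compl_iff_disjoint_left.2 hdisj⟩⟩
  calc L.choose (r + 2) = #(words univ) := by
        rw [card_filter_hammingNorm_eq_and_hammingSupport_subset, card_univ, Fintype.card_fin]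
    _ ≤ #(C.biUnion fun c => words (hammingSupport c)ᶜ) := card_le_card hcover
    _ ≤ ∑ c ∈ C, #(words (hammingSupport c)ᶜ) := card_biUnion_le
    _ = ∑ _c ∈ C, (L - s).choose (r + 2) := sum_congr rfl fun c hc => by
        rw [card_filter_hammingNorm_eq_and_hammingSupport_subset, card_compl, Fintype.card_fin,
          ← hammingNorm_eq_card_hammingSupport, hC.1 c hc]
    _ = #C * (L - s).choose (r + 2) := by rw [sum_const, smul_eq_mul]

theorem stmt6 (L r s : ℕ) (hs : 1 ≤ s) (hL : 2 * s + r + 1 ≤ L)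
    (C : Finset (Fin L → ZMod 2)) (hC : IsPPRIC L s r ↑C) :
    Nat.choose L (r + 2) ≤ C.card * Nat.choose (L - s) (r + 2) :=
  stmt6_general L r s C hC
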